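/- arXiv:2204.04757 — 8 statements merged into one kernel-verified Lean document; each statement's English description precedes it below -/
import Mathlib

section
/- The log-likelihood function ℓ(θ) = θ·t − ln(Σ_{g ∈ 𝒢_k} e^{θ·z(g)}) is strictly concave on ℝⁿ if and only if the affine span of the image z(𝒢_k) is all of ℝⁿ (equivalently, if and only if the convex hull C of z(𝒢_k) has dimension n). -/
open scoped RealInnerProductSpace BigOperators

/-!
The log-likelihood is a linear function minus the log-partition function
`θ ↦ log ∑ g, exp ⟪θ, z g⟫`, so it is strictly concave iff the latter is strictly convex.
By the weighted AM–GM inequality, log-sum-exp satisfies the convexity inequality strictly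
unless the two exponent vectors differ by a constant. Hence the log-partition function is
strictly convex iff no nonzero `v` has `⟪v, z g⟫` independent of `g`, i.e. iff the vector span
of the `z g` has trivial orthogonal complement.
-/

open Finset Real

section ConvexLinear

variable {𝕜 E β : Type*} [Semiring 𝕜] [PartialOrder 𝕜] [AddCommGroup E] [Module 𝕜 E]
  [AddCommGroup β] [PartialOrder β] [IsOrderedAddMonoid β] [Module 𝕜 β]

theorem LinearMap.strictConcaveOn_sub_iff (f : E →ₗ[𝕜] β) {s : Set E} {g : E → β} :
    StrictConcaveOn 𝕜 s (⇑f - g) ↔ StrictConvexOn 𝕜 s g :=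
  ⟨fun h => by simpa using (f.convexOn h.1).sub_strictConcaveOn h,
    fun h => (f.concaveOn h.1).sub_strictConvexOn h⟩

end ConvexLinear

noncomputable def logSumExp {ι : Type*} [Fintype ι] (A : ι → ℝ) : ℝ := log (∑ i, exp (A i))

section LogSumExp

variable {ι : Type*} [Fintype ι]

theorem logSumExp_add_const [Nonempty ι] (A : ι → ℝ) (c : ℝ) :
    logSumExp (fun i => A i + c) = logSumExp A + c := by
  simp only [logSumExp, exp_add, ← Finset.sum_mul]
  rw [log_mul (sum_pos (fun i _ => exp_pos _) univ_nonempty).ne' (exp_pos c).ne', log_exp]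

theorem sum_exp_lt_one_of_sum_exp_eq_one {A B : ι → ℝ} {a b : ℝ} (ha : 0 < a) (hb : 0 < b)
    (hab : a + b = 1) (hA : ∑ i, exp (A i) = 1) (hB : ∑ i, exp (B i) = 1) (hne : A ≠ B) :
    ∑ i, exp (a * A i + b * B i) < 1 := by
  obtain ⟨i₀, hi₀⟩ := Function.ne_iff.mp hne
  calc ∑ i, exp (a * A i + b * B i) = ∑ i, exp (A i) ^ a * exp (B i) ^ b := by
        simp only [exp_add, ← exp_mul, mul_comm a, mul_comm b]
    _ < ∑ i, (a * exp (A i) + b * exp (B i)) :=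
        sum_lt_sum
          (fun i _ =>
            geom_mean_le_arith_mean2_weighted ha.le hb.le (exp_pos _).le (exp_pos _).le hab)
          ⟨i₀, mem_univ _, (geom_mean_lt_arith_mean2_weighted_iff_of_pos ha hb (exp_pos _).le
            (exp_pos _).le hab).mpr (exp_injective.ne hi₀)⟩
    _ = 1 := by rw [sum_add_distrib, ← mul_sum, ← mul_sum, hA, hB, mul_one, mul_one, hab]

theorem logSumExp_lt {A B : ι → ℝ} {a b : ℝ} (ha : 0 < a) (hb : 0 < b) (hab : a + b = 1)
    (hne : ∃ i j, A i - B i ≠ A j - B j) :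
    logSumExp (fun i => a * A i + b * B i) < a * logSumExp A + b * logSumExp B := by
  -- Normalizing both vectors by their log-sum-exp reduces to the case `∑ exp = 1`.
  obtain ⟨i, j, hij⟩ := hne
  have : Nonempty ι := ⟨i⟩
  have hnorm (C : ι → ℝ) : ∑ i, exp (C i - logSumExp C) = 1 := by
    simp only [exp_sub, ← sum_div, logSumExp]
    rw [exp_log (sum_pos (fun i _ => exp_pos _) univ_nonempty), div_self]
    exact (sum_pos (fun i _ => exp_pos _) univ_nonempty).ne'
  have hne : (fun i => A i - logSumExp A) ≠ (fun i => B i - logSumExp B) := by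
    intro h
    have hk (k : ι) : A k - B k = logSumExp A - logSumExp B := by
      linarith [congrFun h k]
    exact hij (by rw [hk, hk])
  have hlt := sum_exp_lt_one_of_sum_exp_eq_one ha hb hab (hnorm A) (hnorm B) hne
  calc logSumExp (fun i => a * A i + b * B i)
      = logSumExp (fun i => a * (A i - logSumExp A) + b * (B i - logSumExp B)) +
          (a * logSumExp A + b * logSumExp B) := by
        rw [← logSumExp_add_const]; congr 1; ext i; ring
    _ < 0 + (a * logSumExp A + b * logSumExp B) :=
        add_lt_add_left (log_neg (sum_pos (fun i _ => exp_pos _) univ_nonempty) hlt) _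
    _ = a * logSumExp A + b * logSumExp B := zero_add _

end LogSumExp

section InnerProductSpace

variable {E : Type*} [NormedAddCommGroup E] [InnerProductSpace ℝ E]

theorem mem_orthogonal_vectorSpan_iff {s : Set E} {v : E} :
    v ∈ (vectorSpan ℝ s)ᗮ ↔ ∀ p ∈ s, ∀ q ∈ s, ⟪v, p⟫ = ⟪v, q⟫ := by
  have hker : v ∈ (vectorSpan ℝ s)ᗮ ↔ vectorSpan ℝ s ≤ LinearMap.ker (innerₛₗ ℝ v) :=
    Submodule.mem_orthogonal' _ _
  rw [hker, vectorSpan_def, Submodule.span_le]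
  constructor
  · intro h p hp q hq
    simpa [inner_sub_right, sub_eq_zero] using h (Set.vsub_mem_vsub hp hq)
  · rintro h _ ⟨p, hp, q, hq, rfl⟩
    simp [inner_sub_right, h p hp q hq]

theorem vectorSpan_eq_top_iff_forall_inner_eq {s : Set E}
    [(vectorSpan ℝ s).HasOrthogonalProjection] :
    vectorSpan ℝ s = ⊤ ↔ ∀ v : E, (∀ p ∈ s, ∀ q ∈ s, ⟪v, p⟫ = ⟪v, q⟫) → v = 0 := by
  simp only [← Submodule.orthogonal_eq_bot_iff, Submodule.eq_bot_iff, mem_orthogonal_vectorSpan_iff]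

variable {ι : Type*} [Fintype ι] [Nonempty ι]

theorem logSumExp_inner_add_smul {z : ι → E} {v : E} {c : ℝ} (hv : ∀ i, ⟪v, z i⟫ = c)
    (θ : E) (s : ℝ) :
    logSumExp (fun i => ⟪θ + s • v, z i⟫) = logSumExp (fun i => ⟪θ, z i⟫) + s * c := by
  simp only [inner_add_left, real_inner_smul_left, hv, logSumExp_add_const]

theorem strictConvexOn_logSumExp_inner_iff (z : ι → E) :
    StrictConvexOn ℝ Set.univ (fun θ => logSumExp fun i => ⟪θ, z i⟫) ↔
      ∀ v : E, (∀ i j, ⟪v, z i⟫ = ⟪v, z j⟫) → v = 0 := by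
  constructor
  · intro h v hv
    by_contra hv0
    obtain ⟨i₀⟩ := ‹Nonempty ι›
    have hline := logSumExp_inner_add_smul (z := z) (fun i => hv i i₀)
    have hmid := h.2 (Set.mem_univ 0) (Set.mem_univ v) (Ne.symm hv0) (one_half_pos (α := ℝ))
      one_half_pos (add_halves 1)
    have h1 := hline 0 1
    have h2 := hline 0 (1 / 2)
    simp only [zero_add, one_smul, smul_zero, smul_eq_mul] at hmid h1 h2
    rw [h1, h2] at hmid
    linarith
  · intro h
    refine ⟨convex_univ, fun x _ y _ hxy a b ha hb hab => ?_⟩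
    have hne : ∃ i j, ⟪x, z i⟫ - ⟪y, z i⟫ ≠ ⟪x, z j⟫ - ⟪y, z j⟫ := by
      by_contra! hc
      exact hxy (sub_eq_zero.mp (h _ fun i j => by simp only [inner_sub_left, hc i j]))
    simpa only [inner_add_left, real_inner_smul_left, smul_eq_mul] using logSumExp_lt ha hb hab hne

end InnerProductSpace

theorem ergm_loglikelihood_strictConcave_iff_general (k n : ℕ)
    (z : SimpleGraph (Fin k) → EuclideanSpace ℝ (Fin n))
    (t : EuclideanSpace ℝ (Fin n)) :
    StrictConcaveOn ℝ Set.univ (fun θ : EuclideanSpace ℝ (Fin n) =>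
      ⟪θ, t⟫ - Real.log (∑ g : SimpleGraph (Fin k), Real.exp ⟪θ, z g⟫)) ↔
    affineSpan ℝ (Set.range z) = ⊤ := by
  rw [AffineSubspace.affineSpan_eq_top_iff_vectorSpan_eq_top_of_nonempty ℝ _ _
    (Set.range_nonempty z), vectorSpan_eq_top_iff_forall_inner_eq]
  simp only [Set.forall_mem_range, ← strictConvexOn_logSumExp_inner_iff]
  exact ((innerₗ _).flip t).strictConcaveOn_sub_iff

/-- The log-likelihood `ℓ θ = θ·t − ln(Σ_{g ∈ 𝒢_k} e^{θ·z(g)})` is strictly concave on `ℝⁿ`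
if and only if the affine span of the image `z(𝒢_k)` is all of `ℝⁿ` (equivalently, the convex
hull of `z(𝒢_k)` has dimension `n`). -/
theorem ergm_loglikelihood_strictConcave_iff (k n : ℕ) (hk : 0 < k) (hn : 0 < n)
    (z : SimpleGraph (Fin k) → EuclideanSpace ℝ (Fin n))
    (t : EuclideanSpace ℝ (Fin n)) :
    StrictConcaveOn ℝ Set.univ (fun θ : EuclideanSpace ℝ (Fin n) =>
      ⟪θ, t⟫ - Real.log (∑ g : SimpleGraph (Fin k), Real.exp ⟪θ, z g⟫)) ↔
    affineSpan ℝ (Set.range z) = ⊤ :=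
  ergm_loglikelihood_strictConcave_iff_general k n z t
end

section
/- A parameter θ̂ ∈ ℝⁿ satisfies L(θ̂) = sup_{θ ∈ ℝⁿ} L(θ) (equivalently, θ̂ is a global maximizer of the log-likelihood ℓ) if and only if the gradient of ℓ vanishes at θ̂, i.e., ∇ℓ(θ̂) = 0. -/
/-!
The log-partition function `A θ = log ∑ g, exp ⟪θ, z g⟫` has gradient the mean of `z` under the
Gibbs weights `exp ⟪θ, z g⟫ / ∑ exp ⟪θ, z ·⟫`, and Jensen's inequality for `exp` under these
weights shows that `A` lies above its tangent planes. Hence `ℓ θ = ⟪θ, t⟫ - A θ` lies below its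
tangent planes, so a stationary point of `ℓ` is a global maximizer; conversely a maximizer of
`L = exp ∘ ℓ` maximizes `ℓ`, and the gradient vanishes at an interior extremum.
-/

open scoped RealInnerProductSpace

section Gibbs

variable {ι E : Type*} [Fintype ι] [NormedAddCommGroup E] [InnerProductSpace ℝ E]

noncomputable def logPartition (z : ι → E) (θ : E) : ℝ :=
  Real.log (∑ i, Real.exp ⟪θ, z i⟫)

noncomputable def gibbsWeight (z : ι → E) (θ : E) (i : ι) : ℝ :=
  Real.exp ⟪θ, z i⟫ / ∑ j, Real.exp ⟪θ, z j⟫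

noncomputable def gibbsMean (z : ι → E) (θ : E) : E :=
  ∑ i, gibbsWeight z θ i • z i

lemma sum_exp_inner_pos [Nonempty ι] (z : ι → E) (θ : E) : 0 < ∑ i, Real.exp ⟪θ, z i⟫ :=
  Finset.sum_pos (fun _ _ => Real.exp_pos _) Finset.univ_nonempty

lemma gibbsWeight_nonneg (z : ι → E) (θ : E) (i : ι) : 0 ≤ gibbsWeight z θ i := by
  unfold gibbsWeight
  positivity

lemma sum_gibbsWeight [Nonempty ι] (z : ι → E) (θ : E) : ∑ i, gibbsWeight z θ i = 1 := by
  simp only [gibbsWeight, ← Finset.sum_div]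
  exact div_self (sum_exp_inner_pos z θ).ne'

lemma hasFDerivAt_inner_left (v θ : E) :
    HasFDerivAt (fun θ : E => ⟪θ, v⟫) (innerSL ℝ v) θ :=
  (innerSL ℝ v).hasFDerivAt.congr_of_eventuallyEq
    (Filter.Eventually.of_forall fun x => real_inner_comm v x)

lemma hasGradientAt_logPartition [Nonempty ι] [CompleteSpace E] (z : ι → E) (θ : E) :
    HasGradientAt (logPartition z) (gibbsMean z θ) θ := by
  have hsum : HasFDerivAt (fun θ : E => ∑ i, Real.exp ⟪θ, z i⟫)
      (∑ i, Real.exp ⟪θ, z i⟫ • innerSL ℝ (z i)) θ :=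
    HasFDerivAt.fun_sum fun i _ => (hasFDerivAt_inner_left (z i) θ).exp
  unfold logPartition
  convert (hsum.log (sum_exp_inner_pos z θ).ne').hasGradientAt using 1
  apply (InnerProductSpace.toDual ℝ E).injective
  ext w
  simp [gibbsMean, gibbsWeight, Finset.mul_sum, div_eq_inv_mul, mul_assoc]

lemma hasGradientAt_inner_sub_logPartition [Nonempty ι] [CompleteSpace E] (z : ι → E)
    (t θ : E) : HasGradientAt (fun θ => ⟪θ, t⟫ - logPartition z θ) (t - gibbsMean z θ) θ := by
  rw [hasGradientAt_iff_hasFDerivAt, map_sub]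
  exact (hasFDerivAt_inner_left t θ).sub (hasGradientAt_logPartition z θ).hasFDerivAt

/-- Jensen's inequality for `exp` under the Gibbs weights at `θ₀`. -/
lemma inner_sub_gibbsMean_le_logPartition_sub [Nonempty ι] (z : ι → E) (θ₀ θ : E) :
    ⟪θ - θ₀, gibbsMean z θ₀⟫ ≤ logPartition z θ - logPartition z θ₀ := by
  have hS₀ := sum_exp_inner_pos z θ₀
  have hS := sum_exp_inner_pos z θ
  have hjensen := convexOn_exp.map_sum_le (t := Finset.univ) (p := fun i => ⟪θ - θ₀, z i⟫)
    (fun i _ => gibbsWeight_nonneg z θ₀ i) (sum_gibbsWeight z θ₀) (fun i _ => Set.mem_univ _)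
  have hmean : ∑ i, gibbsWeight z θ₀ i • ⟪θ - θ₀, z i⟫ = ⟪θ - θ₀, gibbsMean z θ₀⟫ := by
    simp [gibbsMean, inner_sum, real_inner_smul_right]
  have hratio : ∑ i, gibbsWeight z θ₀ i • Real.exp ⟪θ - θ₀, z i⟫ =
      (∑ i, Real.exp ⟪θ, z i⟫) / ∑ i, Real.exp ⟪θ₀, z i⟫ := by
    simp only [gibbsWeight, smul_eq_mul, Finset.sum_div, div_mul_eq_mul_div, ← Real.exp_add,
      inner_sub_left, add_sub_cancel]
  rwa [hmean, hratio, ← Real.le_log_iff_exp_le (div_pos hS hS₀),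
    Real.log_div hS.ne' hS₀.ne'] at hjensen

end Gibbs

theorem ergm_maximizer_iff_gradient_zero_general (k n : ℕ)
    (z : SimpleGraph (Fin k) → EuclideanSpace ℝ (Fin n))
    (t : EuclideanSpace ℝ (Fin n))
    (ℓ : EuclideanSpace ℝ (Fin n) → ℝ)
    (hℓ : ℓ = fun θ => ⟪θ, t⟫ - Real.log (∑ g : SimpleGraph (Fin k), Real.exp ⟪θ, z g⟫))
    (L : EuclideanSpace ℝ (Fin n) → ℝ) (hL : L = fun θ => Real.exp (ℓ θ))
    (θhat : EuclideanSpace ℝ (Fin n)) :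
    (∀ θ : EuclideanSpace ℝ (Fin n), L θ ≤ L θhat) ↔ gradient ℓ θhat = 0 := by
  have hℓ' : ℓ = fun θ => ⟪θ, t⟫ - logPartition z θ := hℓ
  have hgrad : gradient ℓ θhat = t - gibbsMean z θhat := by
    rw [hℓ']
    exact (hasGradientAt_inner_sub_logPartition z t θhat).gradient
  simp only [hL, Real.exp_le_exp]
  constructor
  · intro hmax
    rw [gradient, IsLocalMax.fderiv_eq_zero (Filter.Eventually.of_forall hmax), map_zero]
  · intro hzero θ
    rw [hgrad, sub_eq_zero] at hzero
    have hjensen := inner_sub_gibbsMean_le_logPartition_sub z θhat θ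
    rw [← hzero, inner_sub_left] at hjensen
    rw [hℓ']
    linarith

/-- `θhat` is a global maximizer of the likelihood `L` (equivalently of the log-likelihood `ℓ`)
if and only if the gradient of `ℓ` vanishes at `θhat`. -/
theorem ergm_maximizer_iff_gradient_zero (k n : ℕ) (hk : 0 < k) (hn : 0 < n)
    (z : SimpleGraph (Fin k) → EuclideanSpace ℝ (Fin n))
    (t : EuclideanSpace ℝ (Fin n))
    (ℓ : EuclideanSpace ℝ (Fin n) → ℝ)
    (hℓ : ℓ = fun θ => ⟪θ, t⟫ - Real.log (∑ g : SimpleGraph (Fin k), Real.exp ⟪θ, z g⟫))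
    (L : EuclideanSpace ℝ (Fin n) → ℝ) (hL : L = fun θ => Real.exp (ℓ θ))
    (θhat : EuclideanSpace ℝ (Fin n)) :
    (∀ θ : EuclideanSpace ℝ (Fin n), L θ ≤ L θhat) ↔ gradient ℓ θhat = 0 :=
  ergm_maximizer_iff_gradient_zero_general k n z t ℓ hℓ L hL θhat
end

section
/- If the likelihood L attains its supremum, i.e., there exists θ̂ ∈ ℝⁿ with L(θ̂) = sup_{θ ∈ ℝⁿ} L(θ), then the target vector t lies in the relative interior (intrinsic interior) of the convex hull C of z(𝒢_k). -/
open scoped RealInnerProductSpace BigOperators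

/-!
Since `L θ = (∑ g, exp ⟪θ, z g - t⟫)⁻¹`, a maximiser `θ̂` of `L` is a critical point of the
partition function of the shifted statistics `z g - t`; the vanishing gradient says that `t` is
the barycentre of the `z g` with the strictly positive weights `exp ⟪θ̂, z g - t⟫`. A barycentre
with strictly positive weights lies in the relative interior of the convex hull: by the open
mapping theorem for `c ↦ (∑ cᵢ zᵢ, ∑ cᵢ)`, every point of the affine span close to it is a
barycentre with slightly perturbed, still positive, weights.
-/

open Set Filter Topology

section IntrinsicInterior

variable {E : Type*} [NormedAddCommGroup E] [NormedSpace ℝ E]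

theorem mem_intrinsicInterior_of_forall_dist_lt {s : Set E} {x : E} {ε : ℝ}
    (hx : x ∈ affineSpan ℝ s) (hε : 0 < ε)
    (h : ∀ y ∈ affineSpan ℝ s, dist y x < ε → y ∈ s) :
    x ∈ intrinsicInterior ℝ s :=
  mem_intrinsicInterior.2 ⟨⟨x, hx⟩,
    mem_interior.2 ⟨Metric.ball ⟨x, hx⟩ ε, fun y hy => h y y.2 hy, Metric.isOpen_ball,
      Metric.mem_ball_self hε⟩, rfl⟩

variable {ι : Type*} [Fintype ι]

theorem exists_small_coeffs_of_mem_vectorSpan (z : ι → E) {U : Set (ι → ℝ)} (hU : U ∈ 𝓝 0) :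
    ∃ ε > 0, ∀ v ∈ vectorSpan ℝ (range z), ‖v‖ < ε →
      ∃ c ∈ U, ∑ i, c i = 0 ∧ ∑ i, c i • z i = v := by
  classical
  let Φ : (ι → ℝ) →ₗ[ℝ] E × ℝ :=
    (LinearMap.lsum ℝ (fun _ => ℝ) ℝ fun i => LinearMap.smulRight LinearMap.id (z i)).prod
      (LinearMap.lsum ℝ (fun _ => ℝ) ℝ fun _ => LinearMap.id)
  have hΦ : ∀ c, Φ c = (∑ i, c i • z i, ∑ i, c i) := fun c => by simp [Φ]
  have hspan : ∀ v ∈ vectorSpan ℝ (range z), ((v, 0) : E × ℝ) ∈ LinearMap.range Φ := by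
    intro v hv
    rw [vectorSpan_def] at hv
    refine Submodule.span_induction (p := fun v _ => ((v, 0) : E × ℝ) ∈ LinearMap.range Φ)
      ?_ ?_ ?_ ?_ hv
    · rintro _ ⟨_, ⟨i, rfl⟩, _, ⟨j, rfl⟩, rfl⟩
      exact ⟨Pi.single i 1 - Pi.single j 1, by simp [hΦ, sub_smul, Finset.sum_sub_distrib]⟩
    · exact zero_mem _
    · intro a b _ _ ha hb
      simpa using add_mem ha hb
    · intro r a _ ha
      simpa using Submodule.smul_mem _ r ha
  have hopen := LinearMap.isOpenMap_of_finiteDimensional _ Φ.surjective_rangeRestrict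
  obtain ⟨ε, hε, hball⟩ := Metric.mem_nhds_iff.1 (hopen.image_mem_nhds hU)
  refine ⟨ε, hε, fun v hv hvε => ?_⟩
  obtain ⟨c, hcU, hc⟩ := hball (a := ⟨(v, 0), hspan v hv⟩) (by simpa [Prod.norm_def] using hvε)
  have hc' : Φ c = (v, 0) := congrArg Subtype.val hc
  rw [hΦ, Prod.mk.injEq] at hc'
  exact ⟨c, hcU, hc'.2, hc'.1⟩

theorem Finset.centerMass_mem_intrinsicInterior_convexHull [Nonempty ι] (z : ι → E)
    {w : ι → ℝ} (hw : ∀ i, 0 < w i) :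
    Finset.univ.centerMass w z ∈ intrinsicInterior ℝ (convexHull ℝ (Set.range z)) := by
  set x := Finset.univ.centerMass w z
  set W := ∑ i, w i
  have hW : 0 < W := Finset.sum_pos (fun i _ => hw i) Finset.univ_nonempty
  have hx : x ∈ convexHull ℝ (Set.range z) :=
    Finset.univ.centerMass_mem_convexHull (fun i _ => (hw i).le) hW fun i _ => mem_range_self i
  have hU : ∀ᶠ c in 𝓝 (0 : ι → ℝ), ∀ i, 0 < w i + W * c i :=
    eventually_all.2 fun i => (Continuous.tendsto (by fun_prop) 0).eventually
      (lt_mem_nhds (by simpa using hw i))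
  obtain ⟨ε, hε, hsmall⟩ := exists_small_coeffs_of_mem_vectorSpan z hU
  refine mem_intrinsicInterior_of_forall_dist_lt (subset_affineSpan ℝ _ hx) hε fun y hy hyx => ?_
  rw [affineSpan_convexHull] at hy
  have hyx_mem : y - x ∈ vectorSpan ℝ (Set.range z) := by
    rw [← direction_affineSpan]
    exact AffineSubspace.vsub_mem_direction hy (convexHull_subset_affineSpan _ hx)
  obtain ⟨c, hcpos, hcsum, hcz⟩ := hsmall _ hyx_mem (by rwa [← dist_eq_norm])
  have hy_eq : y = Finset.univ.centerMass (fun i => w i + W * c i) z := by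
    have hsum : ∑ i, (w i + W * c i) = W := by
      rw [Finset.sum_add_distrib, ← Finset.mul_sum, hcsum, mul_zero, add_zero]
    simp only [Finset.centerMass, hsum, add_smul, mul_smul, Finset.sum_add_distrib,
      ← Finset.smul_sum, hcz, smul_add, inv_smul_smul₀ hW.ne']
    exact (add_sub_cancel x y).symm
  rw [hy_eq]
  exact Finset.univ.centerMass_mem_convexHull (fun i _ => (hcpos i).le)
    (Finset.sum_pos (fun i _ => hcpos i) Finset.univ_nonempty) fun i _ => mem_range_self i

end IntrinsicInterior

section Stationarity

variable {E : Type*} [NormedAddCommGroup E] [InnerProductSpace ℝ E] {ι : Type*} [Fintype ι]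

theorem hasFDerivAt_sum_exp_inner (a : ι → E) (θ : E) :
    HasFDerivAt (fun θ => ∑ i, Real.exp ⟪θ, a i⟫)
      (innerSL ℝ (∑ i, Real.exp ⟪θ, a i⟫ • a i)) θ := by
  have hinner : ∀ i, HasFDerivAt (fun θ => ⟪θ, a i⟫) (innerSL ℝ (a i)) θ := fun i => by
    simpa only [coe_innerSL_apply, real_inner_comm (a i)] using (innerSL ℝ (a i)).hasFDerivAt
  simpa only [map_sum, map_smul] using HasFDerivAt.fun_sum fun i _ => (hinner i).exp

theorem sum_exp_inner_smul_eq_zero_of_isLocalMin {a : ι → E} {θ : E}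
    (h : IsLocalMin (fun θ => ∑ i, Real.exp ⟪θ, a i⟫) θ) :
    ∑ i, Real.exp ⟪θ, a i⟫ • a i = 0 := by
  rw [← norm_eq_zero, ← innerSL_apply_norm ℝ,
    h.hasFDerivAt_eq_zero (hasFDerivAt_sum_exp_inner a θ), norm_zero]

theorem exp_inner_sub_log_sum_exp_eq_inv [Nonempty ι] (z : ι → E) (t θ : E) :
    Real.exp (⟪θ, t⟫ - Real.log (∑ i, Real.exp ⟪θ, z i⟫)) =
      (∑ i, Real.exp ⟪θ, z i - t⟫)⁻¹ := by
  have hS : 0 < ∑ i, Real.exp ⟪θ, z i⟫ :=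
    Finset.sum_pos (fun i _ => Real.exp_pos _) Finset.univ_nonempty
  simp only [Real.exp_sub, Real.exp_log hS, inner_sub_right]
  rw [← Finset.sum_div, inv_div]

end Stationarity

theorem Finset.centerMass_eq_of_sum_smul_sub_eq_zero {R ι E : Type*} [Field R] [AddCommGroup E]
    [Module R E] (s : Finset ι) {w : ι → R} {z : ι → E} {x : E} (hw : ∑ i ∈ s, w i ≠ 0)
    (h : ∑ i ∈ s, w i • (z i - x) = 0) : s.centerMass w z = x := by
  simp only [smul_sub, Finset.sum_sub_distrib, ← Finset.sum_smul, sub_eq_zero] at h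
  rw [Finset.centerMass, h, inv_smul_smul₀ hw]

theorem ergm_max_attained_implies_target_in_rint_general (k n : ℕ)
    (z : SimpleGraph (Fin k) → EuclideanSpace ℝ (Fin n))
    (t : EuclideanSpace ℝ (Fin n))
    (L : EuclideanSpace ℝ (Fin n) → ℝ)
    (hL : L = fun θ => Real.exp
      (⟪θ, t⟫ - Real.log (∑ g : SimpleGraph (Fin k), Real.exp ⟪θ, z g⟫)))
    (hmax : ∃ θhat : EuclideanSpace ℝ (Fin n), ∀ θ, L θ ≤ L θhat) :
    t ∈ intrinsicInterior ℝ (convexHull ℝ (Set.range z)) := by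
  obtain ⟨θhat, hθhat⟩ := hmax
  have hZpos : ∀ θ : EuclideanSpace ℝ (Fin n), 0 < ∑ g, Real.exp ⟪θ, z g - t⟫ := fun θ =>
    Finset.sum_pos (fun g _ => Real.exp_pos _) Finset.univ_nonempty
  have hmin : IsLocalMin (fun θ => ∑ g, Real.exp ⟪θ, z g - t⟫) θhat :=
    Eventually.of_forall fun θ => by
      have := hθhat θ
      simp only [hL, exp_inner_sub_log_sum_exp_eq_inv] at this
      exact (inv_le_inv₀ (hZpos θ) (hZpos θhat)).1 this
  have hcenter : Finset.univ.centerMass (fun g => Real.exp ⟪θhat, z g - t⟫) z = t :=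
    Finset.univ.centerMass_eq_of_sum_smul_sub_eq_zero (hZpos θhat).ne'
      (sum_exp_inner_smul_eq_zero_of_isLocalMin hmin)
  rw [← hcenter]
  exact Finset.centerMass_mem_intrinsicInterior_convexHull z fun g => Real.exp_pos _

/-- If the likelihood `L` attains its supremum, then the target vector `t` lies in the
relative interior (intrinsic interior) of the convex hull `C` of `z(𝒢_k)`. -/
theorem ergm_max_attained_implies_target_in_rint (k n : ℕ) (hk : 0 < k) (hn : 0 < n)
    (z : SimpleGraph (Fin k) → EuclideanSpace ℝ (Fin n))
    (t : EuclideanSpace ℝ (Fin n))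
    (L : EuclideanSpace ℝ (Fin n) → ℝ)
    (hL : L = fun θ => Real.exp
      (⟪θ, t⟫ - Real.log (∑ g : SimpleGraph (Fin k), Real.exp ⟪θ, z g⟫)))
    (hmax : ∃ θhat : EuclideanSpace ℝ (Fin n), ∀ θ, L θ ≤ L θhat) :
    t ∈ intrinsicInterior ℝ (convexHull ℝ (Set.range z)) :=
  ergm_max_attained_implies_target_in_rint_general k n z t L hL hmax
end

section
/- Suppose the affine span of z(𝒢_k) is all of ℝⁿ (so the convex hull C of z(𝒢_k) has dimension n). Then there exists θ̂ ∈ ℝⁿ with L(θ̂) = sup_{θ ∈ ℝⁿ} L(θ) if and only if the target vector t lies in the (topological) interior of C. -/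
open scoped RealInnerProductSpace BigOperators

/-!
The log-likelihood `ℓ(θ) = ⟪θ, t⟫ - log ∑ exp ⟪θ, z g⟫` is continuous, and the log-partition
function dominates `⟪θ, x⟫` for every `x` in the convex hull `C`. If the closed `ε`-ball about `t`
lies in `C`, testing `x = t + (ε / ‖θ‖) θ` gives `ℓ(θ) ≤ -ε ‖θ‖`, so `ℓ` tends to `-∞` at infinity
and attains its maximum. If `t ∉ interior C`, a supporting hyperplane at `t` gives `u` with
`⟪u, z g⟫ ≤ ⟪u, t⟫` for all `g`, strictly for some `g` since `C` has nonempty interior; then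
`ℓ(θ + u) > ℓ(θ)` for every `θ`. As `L = exp ∘ ℓ`, the same holds for `L`.
-/

open Real Set Filter

section ExponentialFamily

variable {E : Type*} [NormedAddCommGroup E] [InnerProductSpace ℝ E]
variable {ι : Type*} [Fintype ι]

theorem exists_inner_lt_of_notMem_interior [CompleteSpace E] {C : Set E} {t : E}
    (hC : Convex ℝ C) (hint : (interior C).Nonempty) (ht : t ∉ interior C) :
    ∃ u : E, (∀ x ∈ C, ⟪u, x⟫ ≤ ⟪u, t⟫) ∧ ∀ x ∈ interior C, ⟪u, x⟫ < ⟪u, t⟫ := by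
  obtain ⟨f, hf⟩ := geometric_hahn_banach_open_point hC.interior isOpen_interior ht
  refine ⟨(InnerProductSpace.toDual ℝ E).symm f, fun x hx => ?_, fun x hx => ?_⟩
  · have hC_sub : C ⊆ closure (interior C) := by
      rw [hC.closure_interior_eq_closure_of_nonempty_interior hint]
      exact subset_closure
    have : x ∈ {y | f y ≤ f t} := closure_minimal (fun y hy => (hf y hy).le)
      (isClosed_le f.continuous continuous_const) (hC_sub hx)
    simpa using this
  · simpa using hf x hx

variable (v : ι → E)

noncomputable def partitionFunction (θ : E) : ℝ := ∑ i, exp ⟪θ, v i⟫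

noncomputable def logLikelihood (t θ : E) : ℝ := ⟪θ, t⟫ - log (partitionFunction v θ)

theorem partitionFunction_pos [Nonempty ι] (θ : E) : 0 < partitionFunction v θ :=
  Finset.sum_pos (fun _ _ => exp_pos _) Finset.univ_nonempty

theorem continuous_logLikelihood [Nonempty ι] (t : E) : Continuous (logLikelihood v t) := by
  unfold logLikelihood partitionFunction
  fun_prop (disch := exact fun θ => (partitionFunction_pos v θ).ne')

theorem inner_le_log_partitionFunction (θ : E) {x : E}
    (hx : x ∈ convexHull ℝ (range v)) : ⟪θ, x⟫ ≤ log (partitionFunction v θ) := by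
  refine convexHull_min ?_ (convex_halfSpace_le (innerₗ E θ).isLinear _) hx
  rintro _ ⟨i, rfl⟩
  calc ⟪θ, v i⟫ = log (exp ⟪θ, v i⟫) := (log_exp _).symm
    _ ≤ log (partitionFunction v θ) :=
      log_le_log (exp_pos _) <|
        Finset.single_le_sum (fun j _ => (exp_pos ⟪θ, v j⟫).le) (Finset.mem_univ i)

theorem logLikelihood_le_neg_mul_norm {t : E} {ε : ℝ} (hε : 0 ≤ ε)
    (hball : Metric.closedBall t ε ⊆ convexHull ℝ (range v)) (θ : E) :
    logLikelihood v t θ ≤ -(ε * ‖θ‖) := by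
  rcases eq_or_ne θ 0 with rfl | hθ
  · simpa [logLikelihood] using
      inner_le_log_partitionFunction v 0 (hball (Metric.mem_closedBall_self hε))
  have hθ' : ‖θ‖ ≠ 0 := norm_ne_zero_iff.2 hθ
  set x := t + (ε / ‖θ‖) • θ
  have hx : x ∈ convexHull ℝ (range v) := by
    refine hball ?_
    rw [Metric.mem_closedBall, dist_eq_norm, add_sub_cancel_left, norm_smul, Real.norm_eq_abs,
      abs_of_nonneg (by positivity), div_mul_cancel₀ ε hθ']
  have hθx : ⟪θ, x⟫ = ⟪θ, t⟫ + ε * ‖θ‖ := by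
    rw [inner_add_right, real_inner_smul_right, real_inner_self_eq_norm_sq]
    field_simp
  have := inner_le_log_partitionFunction v θ hx
  rw [logLikelihood]
  linarith

theorem exists_forall_logLikelihood_le_of_mem_interior [FiniteDimensional ℝ E] [Nonempty ι]
    {t : E} (ht : t ∈ interior (convexHull ℝ (range v))) :
    ∃ θ₀, ∀ θ, logLikelihood v t θ ≤ logLikelihood v t θ₀ := by
  obtain ⟨ε, hε, hball⟩ := Metric.nhds_basis_closedBall.mem_iff.1 (mem_interior_iff_mem_nhds.1 ht)
  refine (continuous_logLikelihood v t).exists_forall_ge <|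
    tendsto_atBot_mono (logLikelihood_le_neg_mul_norm v hε.le hball) ?_
  exact tendsto_neg_atTop_atBot.comp (tendsto_norm_cocompact_atTop.const_mul_atTop hε)

theorem partitionFunction_add_lt {t u : E} (hle : ∀ i, ⟪u, v i⟫ ≤ ⟪u, t⟫)
    (hlt : ∃ i, ⟪u, v i⟫ < ⟪u, t⟫) (θ : E) :
    partitionFunction v (θ + u) < exp ⟪u, t⟫ * partitionFunction v θ := by
  obtain ⟨i₀, hi₀⟩ := hlt
  simp only [partitionFunction, Finset.mul_sum, inner_add_left, exp_add, mul_comm (exp ⟪θ, _⟫)]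
  exact Finset.sum_lt_sum
    (fun i _ => mul_le_mul_of_nonneg_right (exp_le_exp.2 (hle i)) (exp_pos _).le)
    ⟨i₀, Finset.mem_univ _, mul_lt_mul_of_pos_right (exp_lt_exp.2 hi₀) (exp_pos _)⟩

theorem logLikelihood_lt_add [Nonempty ι] {t u : E} (hle : ∀ i, ⟪u, v i⟫ ≤ ⟪u, t⟫)
    (hlt : ∃ i, ⟪u, v i⟫ < ⟪u, t⟫) (θ : E) :
    logLikelihood v t θ < logLikelihood v t (θ + u) := by
  have hlog : log (partitionFunction v (θ + u)) < ⟪u, t⟫ + log (partitionFunction v θ) := by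
    rw [← log_exp ⟪u, t⟫, ← log_mul (exp_ne_zero _) (partitionFunction_pos v θ).ne']
    exact log_lt_log (partitionFunction_pos v _) (partitionFunction_add_lt v hle hlt θ)
  rw [logLikelihood, logLikelihood, inner_add_left]
  linarith

theorem exists_logLikelihood_lt_of_notMem_interior [FiniteDimensional ℝ E] [Nonempty ι] {t : E}
    (hspan : affineSpan ℝ (range v) = ⊤) (ht : t ∉ interior (convexHull ℝ (range v))) (θ : E) :
    ∃ θ', logLikelihood v t θ < logLikelihood v t θ' := by
  have hC := convex_convexHull ℝ (range v)
  have hint : (interior (convexHull ℝ (range v))).Nonempty := by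
    rwa [hC.interior_nonempty_iff_affineSpan_eq_top, affineSpan_convexHull]
  obtain ⟨u, hle, hlt⟩ := exists_inner_lt_of_notMem_interior hC hint ht
  have hlt_vertex : ∃ i, ⟪u, v i⟫ < ⟪u, t⟫ := by
    by_contra! hge
    obtain ⟨x, hx⟩ := hint
    have hge_hull : convexHull ℝ (range v) ⊆ {y | ⟪u, t⟫ ≤ ⟪u, y⟫} :=
      convexHull_min (by rintro _ ⟨i, rfl⟩; exact hge i)
        (convex_halfSpace_ge (innerₗ E u).isLinear _)
    exact (hlt x hx).not_ge (hge_hull (interior_subset hx))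
  exact ⟨θ + u, logLikelihood_lt_add v (fun i => hle _ (subset_convexHull ℝ _ ⟨i, rfl⟩))
    hlt_vertex θ⟩

theorem exists_forall_logLikelihood_le_iff [FiniteDimensional ℝ E] [Nonempty ι] {t : E}
    (hspan : affineSpan ℝ (range v) = ⊤) :
    (∃ θ₀, ∀ θ, logLikelihood v t θ ≤ logLikelihood v t θ₀) ↔
      t ∈ interior (convexHull ℝ (range v)) := by
  refine ⟨fun ⟨θ₀, hθ₀⟩ => ?_, exists_forall_logLikelihood_le_of_mem_interior v⟩
  by_contra ht
  obtain ⟨θ, hθ⟩ := exists_logLikelihood_lt_of_notMem_interior v hspan ht θ₀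
  exact (hθ₀ θ).not_gt hθ

end ExponentialFamily

theorem ergm_MLE_exists_iff_interior_general (k n : ℕ)
    (z : SimpleGraph (Fin k) → EuclideanSpace ℝ (Fin n))
    (t : EuclideanSpace ℝ (Fin n))
    (L : EuclideanSpace ℝ (Fin n) → ℝ)
    (hL : L = fun θ => Real.exp
      (⟪θ, t⟫ - Real.log (∑ g : SimpleGraph (Fin k), Real.exp ⟪θ, z g⟫)))
    (hdim : affineSpan ℝ (Set.range z) = ⊤) :
    (∃ θhat : EuclideanSpace ℝ (Fin n), ∀ θ, L θ ≤ L θhat) ↔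
      t ∈ interior (convexHull ℝ (Set.range z)) := by
  have hL' : L = fun θ => exp (logLikelihood z t θ) := hL
  simpa only [hL', exp_le_exp] using exists_forall_logLikelihood_le_iff z hdim

/-- If `C = convexHull(z(𝒢_k))` is top-dimensional, then the likelihood `L` attains its
supremum if and only if `t ∈ interior C`. -/
theorem ergm_MLE_exists_iff_interior (k n : ℕ) (hk : 0 < k) (hn : 0 < n)
    (z : SimpleGraph (Fin k) → EuclideanSpace ℝ (Fin n))
    (t : EuclideanSpace ℝ (Fin n))
    (L : EuclideanSpace ℝ (Fin n) → ℝ)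
    (hL : L = fun θ => Real.exp
      (⟪θ, t⟫ - Real.log (∑ g : SimpleGraph (Fin k), Real.exp ⟪θ, z g⟫)))
    (hdim : affineSpan ℝ (Set.range z) = ⊤) :
    (∃ θhat : EuclideanSpace ℝ (Fin n), ∀ θ, L θ ≤ L θhat) ↔
      t ∈ interior (convexHull ℝ (Set.range z)) :=
  ergm_MLE_exists_iff_interior_general k n z t L hL hdim
end

section
/- Let V = span{z(g₁) − z(g₂) : g₁, g₂ ∈ 𝒢_k}. If the target t lies in the relative interior (intrinsic interior) of the convex hull C of z(𝒢_k), then there exists a unique θ̂ ∈ V such that L(θ̂) = sup_{θ ∈ ℝⁿ} L(θ) (the supremum over all of ℝⁿ is attained at θ̂, and θ̂ is the unique such point lying in V). -/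
/-!
The log-likelihood `ℓ θ = ⟪θ, t⟫ - log ∑ g, exp ⟪θ, z g⟫` is invariant under translation by
`Vᗮ` as soon as `t` lies in the affine span of the `z g`, so it suffices to maximize `ℓ` on `V`.
If `t` lies in the relative interior of the hull, then `t + r • θ / ‖θ‖` lies in the hull for some
fixed `r > 0`; comparing with the vertex `z g` maximizing `⟪θ, ·⟫` gives `ℓ θ ≤ -r ‖θ‖` on `V`, so
`ℓ` attains its maximum on `V`. By Cauchy–Schwarz, `ℓ` is strictly midpoint concave along every
direction of `V`, which makes the maximizer in `V` unique; and `L = exp ∘ ℓ`.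
-/

open scoped RealInnerProductSpace BigOperators

open Filter

theorem log_sum_exp_midpoint_lt {ι : Type*} [Fintype ι] (a b : ι → ℝ)
    (h : ∃ i j, a i - b i ≠ a j - b j) :
    Real.log (∑ i, Real.exp ((a i + b i) / 2)) <
      (Real.log (∑ i, Real.exp (a i)) + Real.log (∑ i, Real.exp (b i))) / 2 := by
  obtain ⟨i₀, j₀, hij⟩ := h
  let u (c : ι → ℝ) : EuclideanSpace ℝ ι := WithLp.toLp 2 fun i => Real.exp (c i / 2)
  have norm_sq_u (c : ι → ℝ) : ‖u c‖ ^ 2 = ∑ i, Real.exp (c i) := by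
    simp only [u, EuclideanSpace.norm_sq_eq, Real.norm_eq_abs, sq_abs, ← Real.exp_nat_mul]
    push_cast; ring_nf
  have norm_u_pos (c : ι → ℝ) : 0 < ‖u c‖ := by
    refine norm_pos_iff.2 fun h0 => (Real.exp_pos (c i₀ / 2)).ne' ?_
    simpa [u] using congrArg (fun v : EuclideanSpace ℝ ι => v i₀) h0
  have inner_u : ⟪u a, u b⟫ = ∑ i, Real.exp ((a i + b i) / 2) := by
    simp only [u, PiLp.inner_apply, RCLike.inner_apply, conj_trivial, ← Real.exp_add]
    exact Finset.sum_congr rfl fun i _ => congrArg Real.exp (by ring)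
  have inner_u_pos : 0 < ⟪u a, u b⟫ :=
    inner_u ▸ Finset.sum_pos (fun i _ => Real.exp_pos _) ⟨i₀, Finset.mem_univ _⟩
  -- Cauchy–Schwarz is strict: equality would make `a - b` constant.
  have hlt : ⟪u a, u b⟫ < ‖u a‖ * ‖u b‖ := by
    refine inner_lt_norm_mul_iff_real.2 fun hpar => hij ?_
    have key (i : ι) : a i - b i = 2 * (Real.log ‖u a‖ - Real.log ‖u b‖) := by
      have hi : ‖u b‖ * Real.exp (a i / 2) = ‖u a‖ * Real.exp (b i / 2) :=
        congrArg (fun v : EuclideanSpace ℝ ι => v i) hpar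
      have := congrArg Real.log hi
      rw [Real.log_mul (norm_u_pos b).ne' (Real.exp_pos _).ne',
        Real.log_mul (norm_u_pos a).ne' (Real.exp_pos _).ne', Real.log_exp, Real.log_exp] at this
      linarith
    rw [key, key]
  calc Real.log (∑ i, Real.exp ((a i + b i) / 2)) < Real.log (‖u a‖ * ‖u b‖) :=
        inner_u ▸ Real.log_lt_log inner_u_pos hlt
    _ = (Real.log (‖u a‖ ^ 2) + Real.log (‖u b‖ ^ 2)) / 2 := by
        rw [Real.log_mul (norm_u_pos a).ne' (norm_u_pos b).ne', Real.log_pow, Real.log_pow]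
        push_cast; ring
    _ = _ := by rw [norm_sq_u, norm_sq_u]

section Geometry

variable {ι E : Type*} [NormedAddCommGroup E] [InnerProductSpace ℝ E]

theorem real_inner_midpoint_left (θ₁ θ₂ x : E) :
    ⟪midpoint ℝ θ₁ θ₂, x⟫ = (⟪θ₁, x⟫ + ⟪θ₂, x⟫) / 2 := by
  rw [midpoint_eq_smul_add, real_inner_smul_left, inner_add_left, invOf_eq_inv]
  ring

theorem inner_eq_of_mem_orthogonal_vectorSpan {s : Set E} {w x y : E}
    (hw : w ∈ (vectorSpan ℝ s)ᗮ) (hx : x ∈ affineSpan ℝ s) (hy : y ∈ affineSpan ℝ s) :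
    ⟪w, x⟫ = ⟪w, y⟫ := by
  have hxy : x - y ∈ vectorSpan ℝ s := by
    rw [← direction_affineSpan]; exact AffineSubspace.vsub_mem_direction hx hy
  rw [← sub_eq_zero, ← inner_sub_right, real_inner_comm]
  exact Submodule.inner_right_of_mem_orthogonal hxy hw

theorem exists_inner_ne_of_mem_vectorSpan {z : ι → E} {d : E}
    (hd : d ∈ vectorSpan ℝ (Set.range z)) (hd₀ : d ≠ 0) : ∃ i j, ⟪d, z i⟫ ≠ ⟪d, z j⟫ := by
  by_contra! hconst
  have hspan : vectorSpan ℝ (Set.range z) ≤ LinearMap.ker (innerₗ E d) := by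
    refine Submodule.span_le.2 ?_
    rintro _ ⟨_, ⟨i, rfl⟩, _, ⟨j, rfl⟩, rfl⟩
    simp [inner_sub_right, hconst i j]
  exact hd₀ (inner_self_eq_zero.1 (hspan hd))

theorem exists_pos_add_mem_of_mem_intrinsicInterior {s : Set E} {x : E}
    (hx : x ∈ intrinsicInterior ℝ s) :
    ∃ r > 0, ∀ v ∈ (affineSpan ℝ s).direction, ‖v‖ ≤ r → v + x ∈ s := by
  obtain ⟨y, hy, rfl⟩ := mem_intrinsicInterior.1 hx
  obtain ⟨δ, hδ, hball⟩ := Metric.mem_nhds_iff.1 (mem_interior_iff_mem_nhds.1 hy)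
  refine ⟨δ / 2, half_pos hδ, fun v hv hvr => ?_⟩
  have hmem : v +ᵥ (y : E) ∈ affineSpan ℝ s := AffineSubspace.vadd_mem_of_mem_direction hv y.2
  refine hball (a := ⟨v +ᵥ (y : E), hmem⟩) ?_
  rw [Metric.mem_ball, Subtype.dist_eq, dist_eq_norm]
  simp only [vadd_eq_add, add_sub_cancel_right]
  linarith

theorem exists_inner_le_of_mem_convexHull_range {z : ι → E} {x : E}
    (hx : x ∈ convexHull ℝ (Set.range z)) (θ : E) : ∃ i, ⟪θ, x⟫ ≤ ⟪θ, z i⟫ := by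
  obtain ⟨_, ⟨i, rfl⟩, hi⟩ :=
    ((innerₗ E θ).convexOn convex_univ).exists_ge_of_mem_convexHull (Set.subset_univ _) hx
  exact ⟨i, hi⟩

end Geometry

namespace FiniteExpFamily

variable {G E : Type*} [Fintype G] [NormedAddCommGroup E] [InnerProductSpace ℝ E]

noncomputable def logPartition (z : G → E) (θ : E) : ℝ :=
  Real.log (∑ g, Real.exp ⟪θ, z g⟫)

noncomputable def logLikelihood (z : G → E) (t θ : E) : ℝ :=
  ⟪θ, t⟫ - logPartition z θ

variable {z : G → E} {t : E}

theorem inner_le_logPartition (θ : E) (g : G) : ⟪θ, z g⟫ ≤ logPartition z θ := by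
  have hle : Real.exp ⟪θ, z g⟫ ≤ ∑ g', Real.exp ⟪θ, z g'⟫ :=
    Finset.single_le_sum (f := fun g' => Real.exp ⟪θ, z g'⟫) (fun g' _ => (Real.exp_pos _).le)
      (Finset.mem_univ g)
  exact (Real.le_log_iff_exp_le ((Real.exp_pos _).trans_le hle)).2 hle

theorem continuous_logPartition [Nonempty G] : Continuous (logPartition z) := by
  refine Continuous.log (by fun_prop) fun θ => ?_
  exact (Finset.sum_pos (fun g _ => Real.exp_pos _) Finset.univ_nonempty).ne'

theorem logPartition_add_of_forall_inner_eq [Nonempty G] {w : E} {c : ℝ}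
    (hw : ∀ g, ⟪w, z g⟫ = c) (θ : E) : logPartition z (θ + w) = logPartition z θ + c := by
  have hsum : ∑ g, Real.exp ⟪θ + w, z g⟫ = (∑ g, Real.exp ⟪θ, z g⟫) * Real.exp c := by
    simp only [Finset.sum_mul, inner_add_left, hw, Real.exp_add]
  rw [logPartition, hsum, Real.log_mul (Finset.sum_pos (fun g _ => Real.exp_pos _)
    Finset.univ_nonempty).ne' (Real.exp_pos c).ne', Real.log_exp, logPartition]

theorem logPartition_midpoint_lt {θ₁ θ₂ : E} (h : ∃ i j, ⟪θ₁ - θ₂, z i⟫ ≠ ⟪θ₁ - θ₂, z j⟫) :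
    logPartition z (midpoint ℝ θ₁ θ₂) < (logPartition z θ₁ + logPartition z θ₂) / 2 := by
  simp only [logPartition, real_inner_midpoint_left]
  refine log_sum_exp_midpoint_lt _ _ ?_
  simpa only [inner_sub_left] using h

theorem logLikelihood_le (θ : E) (g : G) : logLikelihood z t θ ≤ ⟪θ, t⟫ - ⟪θ, z g⟫ :=
  sub_le_sub_left (inner_le_logPartition θ g) _

theorem continuous_logLikelihood [Nonempty G] : Continuous (logLikelihood z t) :=
  (continuous_id.inner continuous_const).sub continuous_logPartition

theorem logLikelihood_add_of_mem_orthogonal [Nonempty G] (ht : t ∈ affineSpan ℝ (Set.range z))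
    (θ : E) {w : E} (hw : w ∈ (vectorSpan ℝ (Set.range z))ᗮ) :
    logLikelihood z t (θ + w) = logLikelihood z t θ := by
  have hconst (g : G) : ⟪w, z g⟫ = ⟪w, t⟫ :=
    inner_eq_of_mem_orthogonal_vectorSpan hw (mem_affineSpan ℝ ⟨g, rfl⟩) ht
  rw [logLikelihood, logLikelihood, logPartition_add_of_forall_inner_eq hconst, inner_add_left]
  ring

theorem logLikelihood_starProjection [Nonempty G] (ht : t ∈ affineSpan ℝ (Set.range z)) (θ : E) :
    logLikelihood z t ((vectorSpan ℝ (Set.range z)).starProjection θ) = logLikelihood z t θ := by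
  conv_rhs => rw [← add_sub_cancel ((vectorSpan ℝ (Set.range z)).starProjection θ) θ]
  exact (logLikelihood_add_of_mem_orthogonal ht _
    (Submodule.sub_starProjection_mem_orthogonal θ)).symm

theorem exists_pos_logLikelihood_le_neg_mul_norm
    (ht : t ∈ intrinsicInterior ℝ (convexHull ℝ (Set.range z))) :
    ∃ r > 0, ∀ θ ∈ vectorSpan ℝ (Set.range z), logLikelihood z t θ ≤ -(r * ‖θ‖) := by
  obtain ⟨r, hr, hball⟩ := exists_pos_add_mem_of_mem_intrinsicInterior ht
  refine ⟨r, hr, fun θ hθ => ?_⟩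
  let v := (r / ‖θ‖) • θ
  have hvθ : ⟪θ, v⟫ = r * ‖θ‖ := by
    rcases eq_or_ne θ 0 with rfl | hθ₀
    · simp
    · rw [real_inner_smul_right, real_inner_self_eq_norm_sq]
      field_simp
  have hv : v + t ∈ convexHull ℝ (Set.range z) := by
    refine hball v ?_ ?_
    · rw [affineSpan_convexHull, direction_affineSpan]
      exact Submodule.smul_mem _ _ hθ
    · rw [norm_smul, Real.norm_of_nonneg (div_nonneg hr.le (norm_nonneg θ))]
      rcases eq_or_ne ‖θ‖ 0 with h | h <;> simp [h, hr.le]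
  obtain ⟨g, hg⟩ := exists_inner_le_of_mem_convexHull_range hv θ
  rw [inner_add_right, hvθ] at hg
  linarith [logLikelihood_le (z := z) (t := t) θ g]

theorem exists_mem_vectorSpan_forall_logLikelihood_le [Nonempty G]
    (ht : t ∈ intrinsicInterior ℝ (convexHull ℝ (Set.range z))) :
    ∃ θhat ∈ vectorSpan ℝ (Set.range z), ∀ θ, logLikelihood z t θ ≤ logLikelihood z t θhat := by
  set V := vectorSpan ℝ (Set.range z)
  obtain ⟨r, hr, hcoercive⟩ := exists_pos_logLikelihood_le_neg_mul_norm ht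
  have hlim : Tendsto (fun θ : V => logLikelihood z t θ) (cocompact V) atBot :=
    tendsto_atBot_mono (fun θ => hcoercive θ θ.2) <| tendsto_neg_atTop_atBot.comp <|
      tendsto_norm_cocompact_atTop.const_mul_atTop hr
  obtain ⟨θhat, hmax⟩ :=
    (continuous_logLikelihood.comp continuous_subtype_val).exists_forall_ge hlim
  have htC : t ∈ affineSpan ℝ (Set.range z) := by
    rw [← affineSpan_convexHull]
    exact mem_affineSpan ℝ (intrinsicInterior_subset ht)
  refine ⟨θhat, θhat.2, fun θ => ?_⟩
  rw [← logLikelihood_starProjection htC θ]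
  exact hmax ⟨_, V.starProjection_apply_mem θ⟩

theorem logLikelihood_midpoint_lt {θ₁ θ₂ : E} (h₁ : θ₁ ∈ vectorSpan ℝ (Set.range z))
    (h₂ : θ₂ ∈ vectorSpan ℝ (Set.range z)) (hne : θ₁ ≠ θ₂) :
    (logLikelihood z t θ₁ + logLikelihood z t θ₂) / 2 < logLikelihood z t (midpoint ℝ θ₁ θ₂) := by
  have hlt := logPartition_midpoint_lt (z := z)
    (exists_inner_ne_of_mem_vectorSpan (Submodule.sub_mem _ h₁ h₂) (sub_ne_zero.2 hne))
  simp only [logLikelihood, real_inner_midpoint_left]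
  linarith

theorem eq_of_forall_logLikelihood_le {θ₁ θ₂ : E} (h₁ : θ₁ ∈ vectorSpan ℝ (Set.range z))
    (h₂ : θ₂ ∈ vectorSpan ℝ (Set.range z)) (hmax₁ : ∀ θ, logLikelihood z t θ ≤ logLikelihood z t θ₁)
    (hmax₂ : ∀ θ, logLikelihood z t θ ≤ logLikelihood z t θ₂) : θ₁ = θ₂ := by
  by_contra hne
  linarith [logLikelihood_midpoint_lt (t := t) h₁ h₂ hne, hmax₁ (midpoint ℝ θ₁ θ₂), hmax₂ θ₁]

end FiniteExpFamily

theorem ergm_rint_implies_unique_MLE_in_V_general (k n : ℕ)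
    (z : SimpleGraph (Fin k) → EuclideanSpace ℝ (Fin n))
    (t : EuclideanSpace ℝ (Fin n))
    (L : EuclideanSpace ℝ (Fin n) → ℝ)
    (hL : L = fun θ => Real.exp
      (⟪θ, t⟫ - Real.log (∑ g : SimpleGraph (Fin k), Real.exp ⟪θ, z g⟫)))
    (ht : t ∈ intrinsicInterior ℝ (convexHull ℝ (Set.range z))) :
    ∃! θhat : EuclideanSpace ℝ (Fin n),
      θhat ∈ vectorSpan ℝ (Set.range z) ∧ ∀ θ, L θ ≤ L θhat := by
  have hL_le_iff (θ θ' : EuclideanSpace ℝ (Fin n)) :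
      L θ ≤ L θ' ↔ FiniteExpFamily.logLikelihood z t θ ≤ FiniteExpFamily.logLikelihood z t θ' := by
    subst hL; exact Real.exp_le_exp
  simp only [hL_le_iff]
  obtain ⟨θhat, hθhat, hmax⟩ :=
    FiniteExpFamily.exists_mem_vectorSpan_forall_logLikelihood_le ht
  exact ⟨θhat, ⟨hθhat, hmax⟩, fun θ hθ =>
    FiniteExpFamily.eq_of_forall_logLikelihood_le hθ.1 hθhat hθ.2 hmax⟩

/-- With `V = vectorSpan ℝ (z(𝒢_k))`: if `t` lies in the relative interior of
`C = convexHull(z(𝒢_k))`, then there is a unique `θhat ∈ V` at which the likelihood `L`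
attains its supremum over all of `ℝⁿ`. -/
theorem ergm_rint_implies_unique_MLE_in_V (k n : ℕ) (hk : 0 < k) (hn : 0 < n)
    (z : SimpleGraph (Fin k) → EuclideanSpace ℝ (Fin n))
    (t : EuclideanSpace ℝ (Fin n))
    (L : EuclideanSpace ℝ (Fin n) → ℝ)
    (hL : L = fun θ => Real.exp
      (⟪θ, t⟫ - Real.log (∑ g : SimpleGraph (Fin k), Real.exp ⟪θ, z g⟫)))
    (ht : t ∈ intrinsicInterior ℝ (convexHull ℝ (Set.range z))) :
    ∃! θhat : EuclideanSpace ℝ (Fin n),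
      θhat ∈ vectorSpan ℝ (Set.range z) ∧ ∀ θ, L θ ≤ L θhat :=
  ergm_rint_implies_unique_MLE_in_V_general k n z t L hL ht
end

section
/- Suppose θ ∈ ℝⁿ satisfies θ·t > θ·z(g) for all g ∈ 𝒢_k (for example, θ is a normal vector to a hyperplane separating t from the convex hull C of z(𝒢_k), pointing into the half-space containing t). Then L(rθ) → ∞ as r → ∞; equivalently, ℓ(rθ) → ∞ as r → ∞. -/
/-!
Along the ray `r ↦ r • θ` the log-likelihood equals `-log ∑_g exp (r (θ·z(g) - θ·t))`.
Every exponent tends to `-∞` by the separation hypothesis, so the finite, positive sum tends to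
`0⁺` and its negated logarithm to `+∞`.
-/

open Filter Topology Real

open scoped RealInnerProductSpace BigOperators

theorem Real.log_sum_exp_mul_eq {ι : Type*} [Fintype ι] [Nonempty ι] (a : ι → ℝ) (r b : ℝ) :
    log (∑ i, exp (r * a i)) = r * b + log (∑ i, exp (r * (a i - b))) := by
  have hsum : ∑ i, exp (r * a i) = exp (r * b) * ∑ i, exp (r * (a i - b)) := by
    rw [Finset.mul_sum]
    refine Finset.sum_congr rfl fun i _ => ?_
    rw [← exp_add]
    ring_nf
  rw [hsum, log_mul (exp_ne_zero _) (Finset.sum_pos (fun i _ => exp_pos _) Finset.univ_nonempty).ne',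
    log_exp]

theorem tendsto_mul_sub_log_sum_exp_mul_atTop {ι : Type*} [Fintype ι] [Nonempty ι]
    {a : ι → ℝ} {b : ℝ} (h : ∀ i, a i < b) :
    Tendsto (fun r => r * b - log (∑ i, exp (r * a i))) atTop atTop := by
  have hterm : ∀ i, Tendsto (fun r => exp (r * (a i - b))) atTop (𝓝 0) := fun i =>
    tendsto_exp_atBot.comp (tendsto_id.atTop_mul_const_of_neg (sub_neg.2 (h i)))
  have hsum : Tendsto (fun r => ∑ i, exp (r * (a i - b))) atTop (𝓝[>] 0) := by
    refine tendsto_nhdsWithin_iff.2 ⟨?_, Eventually.of_forall fun r => ?_⟩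
    · simpa using tendsto_finsetSum Finset.univ fun i _ => hterm i
    · exact Finset.sum_pos (fun i _ => exp_pos _) Finset.univ_nonempty
  refine (tendsto_neg_atBot_atTop.comp (tendsto_log_nhdsGT_zero.comp hsum)).congr fun r => ?_
  simp only [Function.comp_apply, log_sum_exp_mul_eq a r b]
  ring

theorem ergm_likelihood_blows_up_general (k n : ℕ)
    (z : SimpleGraph (Fin k) → EuclideanSpace ℝ (Fin n))
    (t : EuclideanSpace ℝ (Fin n))
    (ℓ : EuclideanSpace ℝ (Fin n) → ℝ)
    (hℓ : ℓ = fun θ => ⟪θ, t⟫ - Real.log (∑ g : SimpleGraph (Fin k), Real.exp ⟪θ, z g⟫))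
    (L : EuclideanSpace ℝ (Fin n) → ℝ) (hL : L = fun θ => Real.exp (ℓ θ))
    (θ : EuclideanSpace ℝ (Fin n))
    (hsep : ∀ g : SimpleGraph (Fin k), ⟪θ, z g⟫ < ⟪θ, t⟫) :
    Filter.Tendsto (fun r : ℝ => L (r • θ)) Filter.atTop Filter.atTop ∧
      Filter.Tendsto (fun r : ℝ => ℓ (r • θ)) Filter.atTop Filter.atTop := by
  subst hℓ hL
  have hℓ : Tendsto (fun r : ℝ => ⟪r • θ, t⟫ - log (∑ g, exp ⟪r • θ, z g⟫)) atTop atTop := by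
    simpa only [real_inner_smul_left] using tendsto_mul_sub_log_sum_exp_mul_atTop hsep
  exact ⟨tendsto_exp_atTop.comp hℓ, hℓ⟩

/-- If `θ·t > θ·z(g)` for all `g ∈ 𝒢_k` (e.g. `θ` is the normal of a hyperplane
separating `t` from `C`, pointing towards `t`), then `ℓ(rθ) → ∞` and `L(rθ) → ∞`
as `r → ∞`. -/
theorem ergm_likelihood_blows_up (k n : ℕ) (hk : 0 < k) (hn : 0 < n)
    (z : SimpleGraph (Fin k) → EuclideanSpace ℝ (Fin n))
    (t : EuclideanSpace ℝ (Fin n))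
    (ℓ : EuclideanSpace ℝ (Fin n) → ℝ)
    (hℓ : ℓ = fun θ => ⟪θ, t⟫ - Real.log (∑ g : SimpleGraph (Fin k), Real.exp ⟪θ, z g⟫))
    (L : EuclideanSpace ℝ (Fin n) → ℝ) (hL : L = fun θ => Real.exp (ℓ θ))
    (θ : EuclideanSpace ℝ (Fin n))
    (hsep : ∀ g : SimpleGraph (Fin k), ⟪θ, z g⟫ < ⟪θ, t⟫) :
    Filter.Tendsto (fun r : ℝ => L (r • θ)) Filter.atTop Filter.atTop ∧
      Filter.Tendsto (fun r : ℝ => ℓ (r • θ)) Filter.atTop Filter.atTop :=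
  ergm_likelihood_blows_up_general k n z t ℓ hℓ L hL θ hsep
end

section
/- Let θ ∈ ℝⁿ be any nonzero vector. Then, as r → ∞, the total probability that Pr_{rθ} assigns to the set of graphs whose statistic is extremal in the direction θ tends to 1: lim_{r → ∞} Σ_{g ∈ 𝒢_k, θ·z(g) = M} Pr_{rθ}(g) = 1, where M = max_{ḡ ∈ 𝒢_k} θ·z(ḡ). -/
/-!
Writing `Z(r) = ∑ exp (r a_j)` and dividing through by `exp (r M)`, the mass of the maximizers
of `a` under the Gibbs weights `exp (r a_i) / Z(r)` is `N / ∑ j, exp (r (a_j - M))`, where `N`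
is the number of maximizers. Each term with `a_j < M` decays to `0`, so the denominator tends
to `N`, which is positive because the maximum is attained.
-/

open scoped RealInnerProductSpace BigOperators Topology
open Filter Finset Real

lemma tendsto_exp_mul_sub_atTop {x M : ℝ} (h : x ≤ M) :
    Tendsto (fun r : ℝ => exp (r * (x - M))) atTop (𝓝 (if x = M then 1 else 0)) := by
  split_ifs with hx
  · simp [hx]
  · have hneg : x - M < 0 := sub_neg.mpr (lt_of_le_of_ne h hx)
    exact tendsto_exp_atBot.comp (tendsto_id.atTop_mul_const_of_neg hneg)

section Gibbs

variable {ι : Type*} [Fintype ι] (a : ι → ℝ) (M : ℝ)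

lemma tendsto_sum_exp_mul_sub_atTop (hle : ∀ i, a i ≤ M) :
    Tendsto (fun r : ℝ => ∑ i, exp (r * (a i - M))) atTop
      (𝓝 (#{i | a i = M} : ℝ)) := by
  rw [← sum_boole]
  exact tendsto_finsetSum _ fun i _ => tendsto_exp_mul_sub_atTop (hle i)

lemma sum_filter_exp_div_sum_exp (r : ℝ) :
    ∑ i ∈ {i | a i = M}, exp (r * a i) / ∑ j, exp (r * a j)
      = #{i | a i = M} / ∑ j, exp (r * (a j - M)) := by
  have hden : ∑ j, exp (r * a j) = exp (r * M) * ∑ j, exp (r * (a j - M)) := by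
    rw [mul_sum]
    refine sum_congr rfl fun j _ => ?_
    rw [← exp_add]
    ring_nf
  have hnum : ∑ i ∈ {i | a i = M}, exp (r * a i) = #{i | a i = M} * exp (r * M) := by
    rw [sum_congr rfl fun i hi => by rw [(mem_filter.mp hi).2], sum_const, nsmul_eq_mul]
  rw [← sum_div, hnum, hden, mul_comm _ (exp _), mul_div_mul_left _ _ (exp_ne_zero _)]

theorem tendsto_gibbs_mass_argmax_atTop (hM : IsGreatest (Set.range a) M) :
    Tendsto (fun r : ℝ => ∑ i ∈ {i | a i = M}, exp (r * a i) / ∑ j, exp (r * a j)) atTop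
      (𝓝 1) := by
  obtain ⟨⟨i₀, hi₀⟩, hle⟩ := hM
  have hN : (#{i | a i = M} : ℝ) ≠ 0 :=
    Nat.cast_ne_zero.mpr (card_ne_zero.mpr ⟨i₀, mem_filter.mpr ⟨mem_univ _, hi₀⟩⟩)
  simp_rw [sum_filter_exp_div_sum_exp]
  have hlim := (tendsto_const_nhds (x := (#{i | a i = M} : ℝ))).div
    (tendsto_sum_exp_mul_sub_atTop a M fun i => hle ⟨i, rfl⟩) hN
  rwa [div_self hN] at hlim

end Gibbs

theorem ergm_degenerate_mass_concentration_general (k n : ℕ)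
    (z : SimpleGraph (Fin k) → EuclideanSpace ℝ (Fin n))
    (Pr : EuclideanSpace ℝ (Fin n) → SimpleGraph (Fin k) → ℝ)
    (hPr : Pr = fun θ g =>
      Real.exp ⟪θ, z g⟫ / ∑ g' : SimpleGraph (Fin k), Real.exp ⟪θ, z g'⟫)
    (θ : EuclideanSpace ℝ (Fin n))
    (M : ℝ)
    (hM : M = Finset.univ.sup' Finset.univ_nonempty fun g : SimpleGraph (Fin k) => ⟪θ, z g⟫) :
    Filter.Tendsto
      (fun r : ℝ => ∑ g ∈ Finset.univ.filter fun g : SimpleGraph (Fin k) => ⟪θ, z g⟫ = M,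
        Pr (r • θ) g)
      Filter.atTop (nhds 1) := by
  subst hPr
  have hmax : IsGreatest (Set.range fun g => ⟪θ, z g⟫) M := by
    obtain ⟨g₀, -, hg₀⟩ := exists_mem_eq_sup' univ_nonempty fun g => ⟪θ, z g⟫
    exact ⟨⟨g₀, by rw [hM, hg₀]⟩,
      Set.forall_mem_range.mpr fun g => hM ▸ le_sup' (fun g => ⟪θ, z g⟫) (mem_univ g)⟩
  simpa only [real_inner_smul_left] using tendsto_gibbs_mass_argmax_atTop _ M hmax

/-- For any nonzero `θ`, as `r → ∞` the total probability that `Pr_{rθ}` assigns to the set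
of graphs whose statistic is extremal in the direction `θ` tends to `1`. -/
theorem ergm_degenerate_mass_concentration (k n : ℕ) (hk : 0 < k) (hn : 0 < n)
    (z : SimpleGraph (Fin k) → EuclideanSpace ℝ (Fin n))
    (Pr : EuclideanSpace ℝ (Fin n) → SimpleGraph (Fin k) → ℝ)
    (hPr : Pr = fun θ g =>
      Real.exp ⟪θ, z g⟫ / ∑ g' : SimpleGraph (Fin k), Real.exp ⟪θ, z g'⟫)
    (θ : EuclideanSpace ℝ (Fin n)) (hθ : θ ≠ 0)
    (M : ℝ)
    (hM : M = Finset.univ.sup' Finset.univ_nonempty fun g : SimpleGraph (Fin k) => ⟪θ, z g⟫) :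
    Filter.Tendsto
      (fun r : ℝ => ∑ g ∈ Finset.univ.filter fun g : SimpleGraph (Fin k) => ⟪θ, z g⟫ = M,
        Pr (r • θ) g)
      Filter.atTop (nhds 1) :=
  ergm_degenerate_mass_concentration_general k n z Pr hPr θ M hM
end

section
/- If a parameter θ̂ ∈ ℝⁿ is a global maximizer of ℓ, then the target t is a convex combination of the realizable statistics with strictly positive weights: t = Σ_{g ∈ 𝒢_k} Pr_{θ̂}(g) · z(g), where each coefficient Pr_{θ̂}(g) is strictly positive and Σ_{g ∈ 𝒢_k} Pr_{θ̂}(g) = 1. -/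
/-!
The log-likelihood is differentiable, and its gradient at `θ` is `t` minus the mean of the
statistics under the Gibbs weights `Pr_θ`, because the derivative of the log-partition function
is that mean. At a global maximizer the gradient vanishes, which is the convex-combination
identity; positivity and normalisation of the Gibbs weights are immediate.
-/

open scoped RealInnerProductSpace BigOperators

open Real

namespace ExponentialFamily

variable {ι E : Type*} [Fintype ι] [NormedAddCommGroup E] [InnerProductSpace ℝ E]

noncomputable def partitionFunction (z : ι → E) (θ : E) : ℝ :=
  ∑ i, exp ⟪θ, z i⟫

noncomputable def gibbsWeight (z : ι → E) (θ : E) (i : ι) : ℝ :=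
  exp ⟪θ, z i⟫ / partitionFunction z θ

theorem partitionFunction_pos [Nonempty ι] (z : ι → E) (θ : E) : 0 < partitionFunction z θ :=
  Finset.sum_pos (fun _ _ => exp_pos _) Finset.univ_nonempty

theorem gibbsWeight_pos [Nonempty ι] (z : ι → E) (θ : E) (i : ι) : 0 < gibbsWeight z θ i :=
  div_pos (exp_pos _) (partitionFunction_pos z θ)

theorem sum_gibbsWeight [Nonempty ι] (z : ι → E) (θ : E) : ∑ i, gibbsWeight z θ i = 1 := by
  simp only [gibbsWeight, ← Finset.sum_div]
  exact div_self (partitionFunction_pos z θ).ne'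

theorem hasFDerivAt_inner_const_right (v θ : E) :
    HasFDerivAt (fun θ : E => ⟪θ, v⟫) (innerSL ℝ v) θ := by
  convert (innerSL ℝ v).hasFDerivAt using 1
  ext θ
  exact real_inner_comm v θ

theorem hasFDerivAt_log_partitionFunction [Nonempty ι] (z : ι → E) (θ : E) :
    HasFDerivAt (fun θ => log (partitionFunction z θ))
      (innerSL ℝ (∑ i, gibbsWeight z θ i • z i)) θ := by
  have hsum : HasFDerivAt (partitionFunction z) (innerSL ℝ (∑ i, exp ⟪θ, z i⟫ • z i)) θ := by
    simp only [map_sum, map_smul]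
    exact HasFDerivAt.fun_sum fun i _ => (hasFDerivAt_inner_const_right (z i) θ).exp
  convert hsum.log (partitionFunction_pos z θ).ne' using 1
  simp only [gibbsWeight, div_eq_inv_mul, ← smul_smul, ← Finset.smul_sum, map_smul]

theorem eq_sum_gibbsWeight_smul_of_isMax [Nonempty ι] (z : ι → E) (t θ₀ : E)
    (hmax : ∀ θ, ⟪θ, t⟫ - log (partitionFunction z θ) ≤ ⟪θ₀, t⟫ - log (partitionFunction z θ₀)) :
    t = ∑ i, gibbsWeight z θ₀ i • z i := by
  have hderiv := (hasFDerivAt_inner_const_right t θ₀).sub (hasFDerivAt_log_partitionFunction z θ₀)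
  have hzero := IsLocalMax.hasFDerivAt_eq_zero (Filter.Eventually.of_forall hmax) hderiv
  exact innerSL_inj.mp (sub_eq_zero.mp hzero)

end ExponentialFamily

theorem ergm_maximizer_gives_convex_combination_general (k n : ℕ)
    (z : SimpleGraph (Fin k) → EuclideanSpace ℝ (Fin n))
    (t : EuclideanSpace ℝ (Fin n))
    (ℓ : EuclideanSpace ℝ (Fin n) → ℝ)
    (hℓ : ℓ = fun θ => ⟪θ, t⟫ - Real.log (∑ g : SimpleGraph (Fin k), Real.exp ⟪θ, z g⟫))
    (Pr : EuclideanSpace ℝ (Fin n) → SimpleGraph (Fin k) → ℝ)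
    (hPr : Pr = fun θ g =>
      Real.exp ⟪θ, z g⟫ / ∑ g' : SimpleGraph (Fin k), Real.exp ⟪θ, z g'⟫)
    (θhat : EuclideanSpace ℝ (Fin n)) (hmax : ∀ θ, ℓ θ ≤ ℓ θhat) :
    t = ∑ g : SimpleGraph (Fin k), Pr θhat g • z g ∧
      (∀ g : SimpleGraph (Fin k), 0 < Pr θhat g) ∧
      ∑ g : SimpleGraph (Fin k), Pr θhat g = 1 := by
  subst hℓ hPr
  exact ⟨ExponentialFamily.eq_sum_gibbsWeight_smul_of_isMax z t θhat hmax,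
    ExponentialFamily.gibbsWeight_pos z θhat, ExponentialFamily.sum_gibbsWeight z θhat⟩

/-- If `θhat` is a global maximizer of the log-likelihood `ℓ`, then `t` is a convex combination
of the realizable statistics with strictly positive weights `Pr_{θhat}(g)` summing to `1`. -/
theorem ergm_maximizer_gives_convex_combination (k n : ℕ) (hk : 0 < k) (hn : 0 < n)
    (z : SimpleGraph (Fin k) → EuclideanSpace ℝ (Fin n))
    (t : EuclideanSpace ℝ (Fin n))
    (ℓ : EuclideanSpace ℝ (Fin n) → ℝ)
    (hℓ : ℓ = fun θ => ⟪θ, t⟫ - Real.log (∑ g : SimpleGraph (Fin k), Real.exp ⟪θ, z g⟫))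
    (Pr : EuclideanSpace ℝ (Fin n) → SimpleGraph (Fin k) → ℝ)
    (hPr : Pr = fun θ g =>
      Real.exp ⟪θ, z g⟫ / ∑ g' : SimpleGraph (Fin k), Real.exp ⟪θ, z g'⟫)
    (θhat : EuclideanSpace ℝ (Fin n)) (hmax : ∀ θ, ℓ θ ≤ ℓ θhat) :
    t = ∑ g : SimpleGraph (Fin k), Pr θhat g • z g ∧
      (∀ g : SimpleGraph (Fin k), 0 < Pr θhat g) ∧
      ∑ g : SimpleGraph (Fin k), Pr θhat g = 1 :=
  ergm_maximizer_gives_convex_combination_general k n z t ℓ hℓ Pr hPr θhat hmax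
end
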